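/- arXiv:1311.3108 — 4 statements merged into one kernel-verified Lean document; each statement's English description precedes it below -/
import Mathlib

section
/- Fix t ∈ ℝ and let (h_n) be a sequence of positive reals with h_n → 0 such that the difference quotients V_t(h_n) := (X_{t+h_n} − X_t)/h_n converge weakly in H to some V. Then V belongs to the closed tangent cone 𝕋_{X_t}C and satisfies ⟨(X̄ + tV̄) − X_t, V⟩ = 0; that is, V ∈ Σ_{X_t}C := 𝕋_{X_t}C ∩ [(X̄ + tV̄) − X_t]^⊥. -/
open MeasureTheory Filter Topology Set
open scoped RealInnerProductSpace

/-- Haraux-type theorem, part 1: any weak limit point `V` of the forward difference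
quotients of `t ↦ X_t = P_C(X̄ + t V̄)` lies in
`Σ_{X_t} C = 𝕋_{X_t} C ∩ [(X̄ + t V̄) − X_t]^⊥`. -/
theorem stmt_0
    {H : Type*} [NormedAddCommGroup H] [InnerProductSpace ℝ H] [CompleteSpace H]
    (C : Set H) (hCne : C.Nonempty) (hCclosed : IsClosed C) (hCconvex : Convex ℝ C)
    (hCcone : ∀ c : ℝ, 0 < c → ∀ Z ∈ C, c • Z ∈ C)
    (Xbar Vbar : H) (X : ℝ → H)
    -- `X t` is the metric projection of `X̄ + t V̄` onto `C`
    (hXmem : ∀ t : ℝ, X t ∈ C)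
    (hXproj : ∀ t : ℝ, ∀ Z ∈ C, ‖(Xbar + t • Vbar) - X t‖ ≤ ‖(Xbar + t • Vbar) - Z‖)
    (t : ℝ) (h : ℕ → ℝ) (hpos : ∀ n, 0 < h n) (hlim : Tendsto h atTop (𝓝 0))
    (V : H)
    -- the difference quotients `V_t(h_n)` converge weakly to `V`
    (hweak : ∀ W : H,
      Tendsto (fun n => ⟪(h n)⁻¹ • (X (t + h n) - X t), W⟫) atTop (𝓝 ⟪V, W⟫)) :
    V ∈ closure {W : H | ∃ c : ℝ, 0 < c ∧ ∃ Y ∈ C, W = c • (Y - X t)} ∧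
      ⟪(Xbar + t • Vbar) - X t, V⟫ = 0 := by
  -- variational inequality for the projection
  have key : ∀ s : ℝ, ∀ Z ∈ C, ⟪(Xbar + s • Vbar) - X s, Z - X s⟫ ≤ 0 := by
    intro s Z hZ
    haveI : Nonempty C := hCne.to_subtype
    have hbdd : BddBelow (Set.range fun w : C => ‖(Xbar + s • Vbar) - (w : H)‖) := by
      refine ⟨0, ?_⟩
      rintro x ⟨w, rfl⟩
      positivity
    have h1 : ‖(Xbar + s • Vbar) - X s‖ = ⨅ w : C, ‖(Xbar + s • Vbar) - (w : H)‖ := by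
      refine le_antisymm (le_ciInf fun w => hXproj s w w.2) (ciInf_le hbdd ⟨X s, hXmem s⟩)
    exact (norm_eq_iInf_iff_real_inner_le_zero hCconvex (hXmem s)).mp h1 Z hZ
  set T : Set H := {W : H | ∃ c : ℝ, 0 < c ∧ ∃ Y ∈ C, W = c • (Y - X t)} with hT
  have Tconv : Convex ℝ T := by
    rintro _ ⟨c₁, hc₁, Y₁, hY₁, rfl⟩ _ ⟨c₂, hc₂, Y₂, hY₂, rfl⟩ a b ha hb hab
    have hc : 0 < a * c₁ + b * c₂ := by
      rcases ha.lt_or_eq with ha' | ha'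
      · nlinarith
      · nlinarith
    refine ⟨a * c₁ + b * c₂, hc, (a * c₁ / (a * c₁ + b * c₂)) • Y₁
        + (b * c₂ / (a * c₁ + b * c₂)) • Y₂, ?_, ?_⟩
    · refine hCconvex hY₁ hY₂ (by positivity) (by positivity) ?_
      field_simp
    · match_scalars <;> field_simp <;> ring
  constructor
  · by_contra hV
    obtain ⟨f, u, hfs, hfV⟩ :=
      geometric_hahn_banach_closed_point Tconv.closure isClosed_closure hV
    set w := (InnerProductSpace.toDual ℝ H).symm f with hw
    have hwx : ∀ x : H, ⟪w, x⟫ = f x := fun x => InnerProductSpace.toDual_symm_apply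
    have hle : ⟪V, w⟫ ≤ u := by
      refine le_of_tendsto (hweak w) (Filter.Eventually.of_forall fun n => ?_)
      have hmem : (h n)⁻¹ • (X (t + h n) - X t) ∈ T :=
        ⟨(h n)⁻¹, inv_pos.mpr (hpos n), X (t + h n), hXmem _, rfl⟩
      have := hfs _ (subset_closure hmem)
      rw [real_inner_comm, hwx]
      exact this.le
    rw [real_inner_comm, hwx] at hle
    linarith
  · set w : H := (Xbar + t • Vbar) - X t with hwdef
    -- upper bound: ⟪q_n, w⟫ ≤ 0
    have hub : ∀ n, ⟪(h n)⁻¹ • (X (t + h n) - X t), w⟫ ≤ 0 := by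
      intro n
      have h1 : ⟪w, X (t + h n) - X t⟫ ≤ 0 := key t _ (hXmem (t + h n))
      rw [real_inner_smul_left, real_inner_comm]
      have := inv_pos.mpr (hpos n)
      nlinarith
    -- lower bound
    have hlb : ∀ n, -(h n * ‖Vbar‖ ^ 2) ≤ ⟪(h n)⁻¹ • (X (t + h n) - X t), w⟫ := by
      intro n
      set d : H := X (t + h n) - X t with hd
      have h2 : ⟪(Xbar + (t + h n) • Vbar) - X (t + h n), X t - X (t + h n)⟫ ≤ 0 :=
        key (t + h n) _ (hXmem t)
      have hrw : (Xbar + (t + h n) • Vbar) - X (t + h n) = w + (h n) • Vbar - d := by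
        rw [hwdef, hd]; module
      have h2' : ⟪w + (h n) • Vbar - d, -d⟫ ≤ 0 := by
        rw [← hrw]
        have : X t - X (t + h n) = -d := by rw [hd]; abel
        rw [← this]; exact h2
      have hexp : -⟪w, d⟫ - h n * ⟪Vbar, d⟫ + ‖d‖ ^ 2 ≤ 0 := by
        have := h2'
        rw [inner_neg_right, inner_sub_left, inner_add_left, real_inner_smul_left,
          real_inner_self_eq_norm_sq] at this
        nlinarith
      -- nonexpansiveness bound: ‖d‖² ≤ h n * ⟪Vbar, d⟫ from combining both VIs
      have h1 : ⟪w, d⟫ ≤ 0 := key t _ (hXmem (t + h n))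
      have hnon : ‖d‖ ^ 2 ≤ h n * ⟪Vbar, d⟫ := by nlinarith
      have hVd : ⟪Vbar, d⟫ ≤ ‖Vbar‖ * ‖d‖ := real_inner_le_norm _ _
      have hdle : ‖d‖ ≤ h n * ‖Vbar‖ := by
        by_contra hgt
        push_neg at hgt
        have h3 : h n * ⟪Vbar, d⟫ ≤ h n * (‖Vbar‖ * ‖d‖) :=
          mul_le_mul_of_nonneg_left hVd (hpos n).le
        rcases eq_or_lt_of_le (norm_nonneg d) with hd0 | hd0
        · nlinarith [mul_nonneg (hpos n).le (norm_nonneg Vbar)]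
        · nlinarith [mul_lt_mul_of_pos_right hgt hd0]
      have hwd : -(h n ^ 2 * ‖Vbar‖ ^ 2) ≤ ⟪w, d⟫ := by
        have h3 : h n * ⟪Vbar, d⟫ ≤ h n * (‖Vbar‖ * ‖d‖) :=
          mul_le_mul_of_nonneg_left hVd (hpos n).le
        have h4 : (h n * ‖Vbar‖) * ‖d‖ ≤ (h n * ‖Vbar‖) * (h n * ‖Vbar‖) :=
          mul_le_mul_of_nonneg_left hdle (mul_nonneg (hpos n).le (norm_nonneg Vbar))
        nlinarith [sq_nonneg ‖d‖]
      rw [real_inner_smul_left, real_inner_comm]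
      have hn := hpos n
      have h5 := mul_le_mul_of_nonneg_left hwd (inv_nonneg.mpr hn.le)
      have heq : (h n)⁻¹ * (-(h n ^ 2 * ‖Vbar‖ ^ 2)) = -(h n * ‖Vbar‖ ^ 2) := by
        field_simp
      linarith [heq ▸ h5]
    have h0 : Tendsto (fun n => -(h n * ‖Vbar‖ ^ 2)) atTop (𝓝 0) := by
      have := (hlim.mul_const (‖Vbar‖ ^ 2)).neg
      simpa using this
    have hup : ⟪V, w⟫ ≤ 0 :=
      le_of_tendsto (hweak w) (Filter.Eventually.of_forall hub)
    have hdown : (0 : ℝ) ≤ ⟪V, w⟫ :=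
      le_of_tendsto_of_tendsto' h0 (hweak w) hlb
    rw [real_inner_comm]
    linarith
end

section
/- Fix t ∈ ℝ and let (h_n) be a sequence of positive reals with h_n → 0 such that the difference quotients V_t(h_n) := (X_{t+h_n} − X_t)/h_n converge weakly in H to some V. Then ⟨V̄ − V, V⟩ ≥ 0. -/
open MeasureTheory Filter Topology Set
open scoped RealInnerProductSpace

/-- Variational inequality for a metric projection onto a convex set. -/
lemma proj_inner_le_zero
    {H : Type*} [NormedAddCommGroup H] [InnerProductSpace ℝ H]
    {C : Set H} (hCconvex : Convex ℝ C) {u x : H} (hx : x ∈ C)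
    (hproj : ∀ Z ∈ C, ‖u - x‖ ≤ ‖u - Z‖) :
    ∀ z ∈ C, ⟪u - x, z - x⟫ ≤ 0 := by
  haveI : Nonempty C := ⟨⟨x, hx⟩⟩
  have hinf : ‖u - x‖ = ⨅ w : C, ‖u - (w : H)‖ := by
    refine le_antisymm (le_ciInf fun w => hproj w w.2) ?_
    exact ciInf_le ⟨0, by rintro r ⟨w, rfl⟩; positivity⟩ (⟨x, hx⟩ : C)
  exact (norm_eq_iInf_iff_real_inner_le_zero hCconvex hx).1 hinf

/-- Haraux-type theorem, part 2: any weak limit point `V` of the forward difference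
quotients of `t ↦ X_t = P_C(X̄ + t V̄)` satisfies `⟪V̄ − V, V⟫ ≥ 0`. -/
theorem stmt_1
    {H : Type*} [NormedAddCommGroup H] [InnerProductSpace ℝ H] [CompleteSpace H]
    (C : Set H) (hCne : C.Nonempty) (hCclosed : IsClosed C) (hCconvex : Convex ℝ C)
    (hCcone : ∀ c : ℝ, 0 < c → ∀ Z ∈ C, c • Z ∈ C)
    (Xbar Vbar : H) (X : ℝ → H)
    -- `X t` is the metric projection of `X̄ + t V̄` onto `C`
    (hXmem : ∀ t : ℝ, X t ∈ C)
    (hXproj : ∀ t : ℝ, ∀ Z ∈ C, ‖(Xbar + t • Vbar) - X t‖ ≤ ‖(Xbar + t • Vbar) - Z‖)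
    (t : ℝ) (h : ℕ → ℝ) (hpos : ∀ n, 0 < h n) (hlim : Tendsto h atTop (𝓝 0))
    (V : H)
    -- the difference quotients `V_t(h_n)` converge weakly to `V`
    (hweak : ∀ W : H,
      Tendsto (fun n => ⟪(h n)⁻¹ • (X (t + h n) - X t), W⟫) atTop (𝓝 ⟪V, W⟫)) :
    0 ≤ ⟪Vbar - V, V⟫ := by
  set Vn : ℕ → H := fun n => (h n)⁻¹ • (X (t + h n) - X t) with hVn
  -- key inequality: ⟪Vbar - Vn n, Vn n⟫ ≥ 0
  have key : ∀ n, 0 ≤ ⟪Vbar - Vn n, Vn n⟫ := by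
    intro n
    have hA := proj_inner_le_zero hCconvex (hXmem (t + h n))
      (hXproj (t + h n)) (X t) (hXmem t)
    have hB := proj_inner_le_zero hCconvex (hXmem t)
      (hXproj t) (X (t + h n)) (hXmem (t + h n))
    have hB' : ⟪X t - (Xbar + t • Vbar), X t - X (t + h n)⟫ ≤ 0 := by
      rw [← inner_neg_neg, neg_sub, neg_sub] at hB
      exact hB
    have hsum : ⟪(h n) • Vbar - (X (t + h n) - X t), X t - X (t + h n)⟫ ≤ 0 := by
      have h0 := add_nonpos hA hB'
      rw [← inner_add_left] at h0
      have e : (h n) • Vbar - (X (t + h n) - X t) = (Xbar + (t + h n) • Vbar - X (t + h n)) + (X t - (Xbar + t • Vbar)) := by module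
      rw [e]; exact h0
    have hh : h n ≠ 0 := (hpos n).ne'
    have h1 : X (t + h n) - X t = (h n) • Vn n := by
      rw [hVn]; rw [smul_smul, mul_inv_cancel₀ hh, one_smul]
    have h2 : X t - X (t + h n) = -((h n) • Vn n) := by rw [← h1]; abel
    rw [h1, h2, inner_neg_right,
      show (h n) • Vbar - (h n) • Vn n = (h n) • (Vbar - Vn n) by module,
      real_inner_smul_left, real_inner_smul_right] at hsum
    nlinarith [hsum, mul_pos (hpos n) (hpos n)]
  -- so ⟪Vn, Vn⟫ ≤ ⟪Vbar, Vn⟫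
  have key' : ∀ n, ⟪Vn n, Vn n⟫ ≤ ⟪Vn n, Vbar⟫ := by
    intro n
    have := key n
    rw [inner_sub_left] at this
    linarith [real_inner_comm (Vn n) Vbar, this]
  -- pass to the limit in ⟪Vn, V⟫² ≤ ⟪Vn, Vbar⟫ * ⟪V, V⟫
  have hstep : ∀ n, ⟪Vn n, V⟫ * ⟪Vn n, V⟫ ≤ ⟪Vn n, Vbar⟫ * ⟪V, V⟫ := by
    intro n
    have h1 := real_inner_mul_inner_self_le (Vn n) V
    have h2 : ⟪Vn n, Vn n⟫ * ⟪V, V⟫ ≤ ⟪Vn n, Vbar⟫ * ⟪V, V⟫ :=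
      mul_le_mul_of_nonneg_right (key' n) (real_inner_self_nonneg)
    linarith
  have hlimA : Tendsto (fun n => ⟪Vn n, V⟫ * ⟪Vn n, V⟫) atTop
      (𝓝 (⟪V, V⟫ * ⟪V, V⟫)) := (hweak V).mul (hweak V)
  have hlimB : Tendsto (fun n => ⟪Vn n, Vbar⟫ * ⟪V, V⟫) atTop
      (𝓝 (⟪V, Vbar⟫ * ⟪V, V⟫)) := (hweak Vbar).mul tendsto_const_nhds
  have hfinal : ⟪V, V⟫ * ⟪V, V⟫ ≤ ⟪V, Vbar⟫ * ⟪V, V⟫ :=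
    le_of_tendsto_of_tendsto' hlimA hlimB hstep
  rcases eq_or_ne V 0 with rfl | hV
  · simp
  · have hVpos : 0 < ⟪V, V⟫ := by
      rw [real_inner_self_eq_norm_sq]
      exact pow_pos (norm_pos_iff.2 hV) 2
    have hle : ⟪V, V⟫ ≤ ⟪V, Vbar⟫ := le_of_mul_le_mul_right (by linarith [hfinal]) hVpos
    rw [inner_sub_left]
    linarith [real_inner_comm Vbar V, hle]
end

section
/- Fix t ∈ ℝ and let (h_n) be a sequence of positive reals with h_n → 0 such that the difference quotients V_t(h_n) := (X_{t+h_n} − X_t)/h_n converge weakly in H to some V. Then for every W ∈ T_{X_t}C with ⟨(X̄ + tV̄) − X_t, W⟩ = 0, one has ⟨V̄ − V, W⟩ ≤ 0. -/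
open MeasureTheory Filter Topology Set
open scoped RealInnerProductSpace

/-- Haraux-type theorem, part 3: if `V` is a weak limit point of the forward difference
quotients of `t ↦ X_t = P_C(X̄ + t V̄)`, then `⟪V̄ − V, W⟫ ≤ 0` for every
`W ∈ T_{X_t} C ∩ [(X̄ + t V̄) − X_t]^⊥`. -/
theorem stmt_2
    {H : Type*} [NormedAddCommGroup H] [InnerProductSpace ℝ H] [CompleteSpace H]
    (C : Set H) (hCne : C.Nonempty) (hCclosed : IsClosed C) (hCconvex : Convex ℝ C)
    (hCcone : ∀ c : ℝ, 0 < c → ∀ Z ∈ C, c • Z ∈ C)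
    (Xbar Vbar : H) (X : ℝ → H)
    -- `X t` is the metric projection of `X̄ + t V̄` onto `C`
    (hXmem : ∀ t : ℝ, X t ∈ C)
    (hXproj : ∀ t : ℝ, ∀ Z ∈ C, ‖(Xbar + t • Vbar) - X t‖ ≤ ‖(Xbar + t • Vbar) - Z‖)
    (t : ℝ) (h : ℕ → ℝ) (hpos : ∀ n, 0 < h n) (hlim : Tendsto h atTop (𝓝 0))
    (V : H)
    -- the difference quotients `V_t(h_n)` converge weakly to `V`
    (hweak : ∀ W : H,
      Tendsto (fun n => ⟪(h n)⁻¹ • (X (t + h n) - X t), W⟫) atTop (𝓝 ⟪V, W⟫)) :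
    ∀ W : H, (∃ c : ℝ, 0 < c ∧ ∃ Y ∈ C, W = c • (Y - X t)) →
      ⟪(Xbar + t • Vbar) - X t, W⟫ = 0 → ⟪Vbar - V, W⟫ ≤ 0 := by
  -- variational inequality for the projection
  have VI : ∀ s : ℝ, ∀ Z ∈ C, ⟪(Xbar + s • Vbar) - X s, Z - X s⟫ ≤ 0 := by
    intro s Z hZ
    have hinf : ‖(Xbar + s • Vbar) - X s‖ = ⨅ w : C, ‖(Xbar + s • Vbar) - w‖ := by
      haveI : Nonempty C := ⟨⟨X s, hXmem s⟩⟩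
      refine le_antisymm (le_ciInf fun w => hXproj s w w.2) ?_
      have hbdd : BddBelow (Set.range fun w : C => ‖(Xbar + s • Vbar) - (w : H)‖) :=
        ⟨0, by rintro x ⟨w, rfl⟩; exact norm_nonneg _⟩
      exact ciInf_le hbdd ⟨X s, hXmem s⟩
    exact (norm_eq_iInf_iff_real_inner_le_zero hCconvex (hXmem s)).mp hinf Z hZ
  rintro W ⟨c, hc, Y, hY, rfl⟩ horto
  set Yt := Y - X t with hYt
  set D := (Xbar + t • Vbar) - X t with hD
  have hDYt : ⟪D, Yt⟫ = 0 := by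
    rw [real_inner_smul_right] at horto
    exact (mul_eq_zero.mp horto).resolve_left (ne_of_gt hc)
  -- key pointwise inequality
  have hle : ∀ n, ⟪Vbar, Yt⟫ ≤
      h n * ⟪(h n)⁻¹ • (X (t + h n) - X t), Vbar⟫
        + ⟪(h n)⁻¹ • (X (t + h n) - X t), Yt⟫ := by
    intro n
    set K := X (t + h n) - X t with hK
    have h1 : ⟪D + h n • Vbar - K, Yt - K⟫ ≤ 0 := by
      have := VI (t + h n) Y hY
      have hvec : (Xbar + (t + h n) • Vbar) - X (t + h n) = D + h n • Vbar - K := by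
        rw [hD, hK]; module
      have hvec2 : Y - X (t + h n) = Yt - K := by rw [hYt, hK]; abel
      rwa [hvec, hvec2] at this
    have h2 : ⟪D, K⟫ ≤ 0 := VI t (X (t + h n)) (hXmem (t + h n))
    have hKK : (0:ℝ) ≤ ⟪K, K⟫ := real_inner_self_nonneg
    have h1' : ⟪D, Yt⟫ - ⟪D, K⟫ + h n * ⟪Vbar, Yt⟫ - h n * ⟪Vbar, K⟫
        - ⟪K, Yt⟫ + ⟪K, K⟫ ≤ 0 := by
      have e : ⟪D + h n • Vbar - K, Yt - K⟫
          = ⟪D, Yt⟫ - ⟪D, K⟫ + h n * ⟪Vbar, Yt⟫ - h n * ⟪Vbar, K⟫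
            - ⟪K, Yt⟫ + ⟪K, K⟫ := by
        simp [inner_sub_left, inner_sub_right, inner_add_left, real_inner_smul_left]
        ring
      linarith [e ▸ h1]
    rw [real_inner_smul_left, real_inner_smul_left]
    have hn := hpos n
    have hinv : h n * (h n)⁻¹ = 1 := mul_inv_cancel₀ (ne_of_gt hn)
    have hcomm : ⟪K, Vbar⟫ = ⟪Vbar, K⟫ := real_inner_comm _ _
    have key : h n * ⟪Vbar, Yt⟫ ≤ h n * ⟪K, Vbar⟫ + ⟪K, Yt⟫ := by
      nlinarith [h1', h2, hKK, hDYt, hcomm, hn]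
    have heq : h n * (h n * ((h n)⁻¹ * ⟪K, Vbar⟫) + (h n)⁻¹ * ⟪K, Yt⟫)
        = h n * ⟪K, Vbar⟫ + ⟪K, Yt⟫ := by
      field_simp
    nlinarith [key, heq, hn]
  -- pass to the limit
  have hlimseq : Tendsto (fun n =>
      h n * ⟪(h n)⁻¹ • (X (t + h n) - X t), Vbar⟫
        + ⟪(h n)⁻¹ • (X (t + h n) - X t), Yt⟫) atTop
      (𝓝 (0 * ⟪V, Vbar⟫ + ⟪V, Yt⟫)) :=
    (hlim.mul (hweak Vbar)).add (hweak Yt)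
  have hfin : ⟪Vbar, Yt⟫ ≤ 0 * ⟪V, Vbar⟫ + ⟪V, Yt⟫ := ge_of_tendsto' hlimseq hle
  rw [zero_mul, zero_add] at hfin
  rw [real_inner_smul_right, inner_sub_left]
  have : ⟪Vbar, Yt⟫ - ⟪V, Yt⟫ ≤ 0 := by linarith
  exact mul_nonpos_of_nonneg_of_nonpos (le_of_lt hc) this
end

section
/- The set C of monotone maps is a closed subset of L²(ℝ,μ): if X^k ∈ C for all k and X^k → X strongly in L²(ℝ,μ), then X ∈ C. -/
open MeasureTheory Filter Topology Set
open scoped RealInnerProductSpace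

/-- The support of a Borel measure: the set of points all of whose open
neighborhoods have positive measure. -/
def msupport {α : Type*} [TopologicalSpace α] [MeasurableSpace α] (ν : Measure α) : Set α :=
  {z : α | ∀ U : Set α, IsOpen U → z ∈ U → 0 < ν U}

/-- A monotone subset of `ℝ × ℝ`. -/
def MonotoneSet (Γ : Set (ℝ × ℝ)) : Prop :=
  ∀ p ∈ Γ, ∀ q ∈ Γ, 0 ≤ (p.1 - q.1) * (p.2 - q.2)

/-- The transport plan `γ_X = (id, X) # μ` induced by `X ∈ L²(ℝ, μ)`. -/
noncomputable def plan (μ : Measure ℝ) (X : MeasureTheory.Lp ℝ 2 μ) : Measure (ℝ × ℝ) :=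
  Measure.map (fun m => (m, X m)) μ

/-- The cone of monotone maps in `L²(ℝ, μ)`. -/
def monoCone (μ : Measure ℝ) : Set (MeasureTheory.Lp ℝ 2 μ) :=
  {X | MonotoneSet (msupport (plan μ X))}

/-- In a second-countable space, the complement of the support is null. -/
lemma msupport_compl_null {α : Type*} [TopologicalSpace α] [MeasurableSpace α]
    [SecondCountableTopology α] [OpensMeasurableSpace α] (ν : Measure α) :
    ν (msupport ν)ᶜ = 0 := by
  obtain ⟨B, hBc, -, hB⟩ := TopologicalSpace.exists_countable_basis α
  have hsub : (msupport ν)ᶜ ⊆ ⋃ b ∈ {b ∈ B | ν b = 0}, b := by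
    intro z hz
    simp only [mem_compl_iff, msupport, mem_setOf_eq] at hz
    push_neg at hz
    obtain ⟨U, hU, hzU, hνU⟩ := hz
    obtain ⟨b, hb, hzb, hbU⟩ := hB.exists_subset_of_mem_open hzU hU
    have hνb : ν b = 0 := le_antisymm ((measure_mono hbU).trans (by simpa using hνU)) bot_le
    exact mem_biUnion ⟨hb, hνb⟩ hzb
  refine measure_mono_null hsub ?_
  rw [measure_biUnion_null_iff (hBc.mono (sep_subset _ _))]
  exact fun b hb => hb.2

/-- If a continuous function is a.e. nonnegative, it is nonnegative on the support. -/
lemma nonneg_on_msupport {α : Type*} [TopologicalSpace α] [MeasurableSpace α]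
    [OpensMeasurableSpace α] {ν : Measure α} {f : α → ℝ} (hf : Continuous f)
    (h : ∀ᵐ x ∂ν, 0 ≤ f x) : ∀ x ∈ msupport ν, 0 ≤ f x := by
  intro x hx
  by_contra hlt
  push_neg at hlt
  have hU : IsOpen (f ⁻¹' Set.Iio 0) := hf.isOpen_preimage _ isOpen_Iio
  have hpos := hx _ hU (by simpa using hlt)
  have h0 : ν (f ⁻¹' Set.Iio 0) = 0 := by
    refine measure_mono_null ?_ (ae_iff.mp h)
    intro y hy
    simp only [mem_preimage, mem_Iio] at hy
    simpa using not_le.mpr hy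
  rw [h0] at hpos
  exact lt_irrefl _ hpos

/-- Conversely, a continuous function nonnegative on the support is a.e. nonnegative. -/
lemma ae_nonneg_of_msupport {α : Type*} [TopologicalSpace α] [MeasurableSpace α]
    [SecondCountableTopology α] [OpensMeasurableSpace α] {ν : Measure α}
    {f : α → ℝ} (h : ∀ x ∈ msupport ν, 0 ≤ f x) : ∀ᵐ x ∂ν, 0 ≤ f x := by
  rw [ae_iff]
  refine measure_mono_null (fun x hx => ?_) (msupport_compl_null ν)
  simp only [mem_setOf_eq, not_le] at hx
  intro hmem
  exact absurd (h x hmem) (not_le.mpr hx)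

/-- An a.e. property on each factor holds a.e. on the product. -/
lemma ae_pair {μ : Measure ℝ} [SFinite μ] {p : ℝ → Prop} (h : ∀ᵐ m ∂μ, p m) :
    ∀ᵐ z ∂μ.prod μ, p z.1 ∧ p z.2 := by
  obtain ⟨N, hsub, hNm, hN0⟩ := exists_measurable_superset_of_null (ae_iff.mp h)
  rw [ae_iff]
  have hnull : μ.prod μ (N ×ˢ Set.univ ∪ Set.univ ×ˢ N) = 0 := by
    refine measure_union_null ?_ ?_
    · rw [Measure.prod_prod, hN0, zero_mul]
    · rw [Measure.prod_prod, hN0, mul_zero]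
  refine measure_mono_null (fun z hz => ?_) hnull
  simp only [mem_setOf_eq, not_and_or] at hz
  rcases hz with hz | hz
  · exact Or.inl ⟨hsub hz, trivial⟩
  · exact Or.inr ⟨trivial, hsub hz⟩

/-- The continuous "monotonicity defect" function on pairs of points. -/
lemma contF : Continuous (fun z : (ℝ × ℝ) × ℝ × ℝ => (z.1.1 - z.2.1) * (z.1.2 - z.2.2)) := by
  fun_prop

lemma measF : MeasurableSet {z : (ℝ × ℝ) × ℝ × ℝ | 0 ≤ (z.1.1 - z.2.1) * (z.1.2 - z.2.2)} := by
  have : {z : (ℝ × ℝ) × ℝ × ℝ | 0 ≤ (z.1.1 - z.2.1) * (z.1.2 - z.2.2)}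
      = (fun z : (ℝ × ℝ) × ℝ × ℝ => (z.1.1 - z.2.1) * (z.1.2 - z.2.2)) ⁻¹' Set.Ici 0 := rfl
  rw [this]
  exact contF.measurable measurableSet_Ici

/-- Membership in the monotone cone is equivalent to an a.e. monotonicity property
on the product measure. -/
lemma monoCone_iff_ae (μ : Measure ℝ) [IsProbabilityMeasure μ] (Y : MeasureTheory.Lp ℝ 2 μ) :
    Y ∈ monoCone μ ↔ ∀ᵐ z ∂μ.prod μ, 0 ≤ (z.1 - z.2) * (Y z.1 - Y z.2) := by
  have hYae : AEMeasurable (fun m => Y m) μ := (Lp.aestronglyMeasurable Y).aemeasurable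
  set g : ℝ → ℝ := hYae.mk _ with hgdef
  have hg : Measurable g := hYae.measurable_mk
  have hYg : (fun m => Y m) =ᵐ[μ] g := hYae.ae_eq_mk
  set φ : ℝ → ℝ × ℝ := fun m => (m, g m) with hφdef
  have hφ : Measurable φ := measurable_id.prodMk hg
  have hplan : plan μ Y = Measure.map φ μ := by
    refine Measure.map_congr ?_
    filter_upwards [hYg] with m hm
    simp [φ, hm]
  have hprod : (plan μ Y).prod (plan μ Y) = Measure.map (Prod.map φ φ) (μ.prod μ) := by
    rw [hplan, Measure.map_prod_map _ _ hφ hφ]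
  haveI : IsProbabilityMeasure (plan μ Y) := by
    rw [hplan]; exact Measure.isProbabilityMeasure_map hφ.aemeasurable
  -- transfer between (Y z.1, Y z.2) and (g z.1, g z.2) a.e. on the product
  have hYg2 : ∀ᵐ z ∂μ.prod μ, Y z.1 = g z.1 ∧ Y z.2 = g z.2 := ae_pair hYg
  constructor
  · intro hmono
    -- the monotonicity function is nonneg on the support of the product plan
    have hsupp : ∀ z ∈ msupport ((plan μ Y).prod (plan μ Y)),
        0 ≤ (z.1.1 - z.2.1) * (z.1.2 - z.2.2) := by
      rintro ⟨p, q⟩ hz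
      have hp : p ∈ msupport (plan μ Y) := by
        intro U hU hpU
        have := hz (U ×ˢ Set.univ) (hU.prod isOpen_univ) ⟨hpU, trivial⟩
        rw [Measure.prod_prod] at this
        by_contra h0
        simp only [not_lt, nonpos_iff_eq_zero] at h0
        rw [h0, zero_mul] at this
        exact lt_irrefl _ this
      have hq : q ∈ msupport (plan μ Y) := by
        intro U hU hqU
        have := hz (Set.univ ×ˢ U) (isOpen_univ.prod hU) ⟨trivial, hqU⟩
        rw [Measure.prod_prod] at this
        by_contra h0
        simp only [not_lt, nonpos_iff_eq_zero] at h0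
        rw [h0, mul_zero] at this
        exact lt_irrefl _ this
      exact hmono p hp q hq
    have hae : ∀ᵐ z ∂(plan μ Y).prod (plan μ Y), 0 ≤ (z.1.1 - z.2.1) * (z.1.2 - z.2.2) :=
      ae_nonneg_of_msupport hsupp
    rw [hprod, ae_map_iff (hφ.prodMap hφ).aemeasurable measF] at hae
    filter_upwards [hae, hYg2] with z hz hz2
    simp only [Prod.map, φ] at hz
    rw [hz2.1, hz2.2]
    exact hz
  · intro hae
    have haeg : ∀ᵐ z ∂μ.prod μ, 0 ≤ (z.1 - z.2) * (g z.1 - g z.2) := by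
      filter_upwards [hae, hYg2] with z hz hz2
      rw [← hz2.1, ← hz2.2]
      exact hz
    have hmap : ∀ᵐ w ∂(plan μ Y).prod (plan μ Y), 0 ≤ (w.1.1 - w.2.1) * (w.1.2 - w.2.2) := by
      rw [hprod, ae_map_iff (hφ.prodMap hφ).aemeasurable measF]
      exact haeg
    have hsupp := nonneg_on_msupport contF hmap
    intro p hp q hq
    refine hsupp (p, q) ?_
    intro U hU hpq
    obtain ⟨V, W, hV, hW, hpV, hqW, hVW⟩ := isOpen_prod_iff.mp hU p q hpq
    calc (0 : ENNReal) < plan μ Y V * plan μ Y W :=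
          ENNReal.mul_pos (hp V hV hpV).ne' (hq W hW hqW).ne'
      _ = (plan μ Y).prod (plan μ Y) (V ×ˢ W) := (Measure.prod_prod V W).symm
      _ ≤ (plan μ Y).prod (plan μ Y) U := measure_mono hVW

/-- The cone `C` of monotone maps is a closed subset of `L²(ℝ,μ)`: if `Xᵏ ∈ C` for all `k`
and `Xᵏ → X` strongly in `L²(ℝ,μ)`, then `X ∈ C`. -/
theorem stmt_5 (μ : Measure ℝ) [IsProbabilityMeasure μ]
    (hμ2 : Integrable (fun x => x ^ 2) μ)
    (Xk : ℕ → MeasureTheory.Lp ℝ 2 μ) (hXk : ∀ k, Xk k ∈ monoCone μ)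
    (X : MeasureTheory.Lp ℝ 2 μ) (hconv : Tendsto Xk atTop (𝓝 X)) :
    X ∈ monoCone μ := by
  have hmeas : TendstoInMeasure μ (fun k => Xk k) atTop X :=
    tendstoInMeasure_of_tendsto_Lp hconv
  obtain ⟨ns, -, hns⟩ := hmeas.exists_seq_tendsto_ae
  rw [monoCone_iff_ae]
  have hall : ∀ᵐ z ∂μ.prod μ, ∀ i : ℕ, 0 ≤ (z.1 - z.2) * ((Xk (ns i)) z.1 - (Xk (ns i)) z.2) := by
    rw [ae_all_iff]
    intro i
    exact (monoCone_iff_ae μ (Xk (ns i))).mp (hXk (ns i))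
  have htend : ∀ᵐ z ∂μ.prod μ,
      Tendsto (fun i => (Xk (ns i)) z.1) atTop (𝓝 (X z.1)) ∧
      Tendsto (fun i => (Xk (ns i)) z.2) atTop (𝓝 (X z.2)) := ae_pair hns
  filter_upwards [hall, htend] with z hz ⟨ht1, ht2⟩
  have : Tendsto (fun i => (z.1 - z.2) * ((Xk (ns i)) z.1 - (Xk (ns i)) z.2)) atTop
      (𝓝 ((z.1 - z.2) * (X z.1 - X z.2))) := ((ht1.sub ht2).const_mul _)
  exact ge_of_tendsto' this hz
end
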